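/- The cosine measure of the canonical minimal positive basis {e_1, ..., e_n, -e} of ℝⁿ equals 1/√(n² + 2(n−1)√n). -/

import Mathlib

open Matrix Finset

/-- The cosine measure of a nonempty finite set of vectors in `ℝⁿ`. -/
noncomputable def cosineMeasure {n : ℕ} (S : Finset (Fin n → ℝ)) (hS : S.Nonempty) : ℝ :=
  sInf {r : ℝ | ∃ v : Fin n → ℝ, v ⬝ᵥ v = 1 ∧
    r = S.sup' hS (fun d => v ⬝ᵥ d / Real.sqrt (d ⬝ᵥ d))}

private lemma key_ineq (n : ℕ) (hn : 1 ≤ n) (v : Fin n → ℝ) (m : ℝ)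
    (h1 : ∀ i, v i ≤ m)
    (h2 : -Real.sqrt n * m ≤ ∑ i, v i)
    (hv : ∑ i, v i * v i = 1) :
    1 / Real.sqrt ((n : ℝ) ^ 2 + 2 * ((n : ℝ) - 1) * Real.sqrt n) ≤ m := by
  have hn' : (1 : ℝ) ≤ (n : ℝ) := by exact_mod_cast hn
  set sn := Real.sqrt n with hsn_def
  have hsn2 : sn ^ 2 = (n : ℝ) := Real.sq_sqrt (by positivity)
  have hsn1 : 1 ≤ sn := by
    rw [show (1:ℝ) = Real.sqrt 1 by simp [Real.sqrt_one]]
    exact Real.sqrt_le_sqrt hn'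
  -- m > 0
  have hsumle : ∑ i, v i ≤ (n : ℝ) * m := by
    calc ∑ i, v i ≤ (univ : Finset (Fin n)).card • m :=
          Finset.sum_le_card_nsmul _ _ _ (fun i _ => h1 i)
      _ = (n : ℝ) * m := by simp [nsmul_eq_mul]
  have hm0 : 0 ≤ m := by nlinarith
  have hm : 0 < m := by
    rcases lt_or_eq_of_le hm0 with h | h
    · exact h
    · exfalso
      have hall : ∀ i ∈ (univ : Finset (Fin n)), v i ≤ 0 := fun i _ => by
        simpa [← h] using h1 i
      have hsum0 : ∑ i, v i = 0 := le_antisymm (Finset.sum_nonpos hall)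
        (by nlinarith [h2])
      have : ∀ i ∈ (univ : Finset (Fin n)), v i = 0 :=
        (Finset.sum_eq_zero_iff_of_nonpos hall).1 hsum0
      have : ∑ i, v i * v i = 0 :=
        Finset.sum_eq_zero (fun i hi => by rw [this i hi]; ring)
      rw [this] at hv; norm_num at hv
  set B : ℝ := (sn + (n : ℝ) - 1) * m with hB_def
  have hlow : ∀ i, -B ≤ v i := by
    intro i
    have herase : ∑ j ∈ univ.erase i, v j + v i = ∑ j, v j :=
      Finset.sum_erase_add _ _ (mem_univ i)
    have hcard : (univ.erase i).card = n - 1 := by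
      simp [Finset.card_erase_of_mem]
    have hle : ∑ j ∈ univ.erase i, v j ≤ ((n : ℝ) - 1) * m := by
      calc ∑ j ∈ univ.erase i, v j ≤ (univ.erase i).card • m :=
            Finset.sum_le_card_nsmul _ _ _ (fun j _ => h1 j)
        _ = ((n : ℝ) - 1) * m := by
            rw [hcard, nsmul_eq_mul, Nat.cast_sub hn]; norm_num
    nlinarith [h2]
  have hpt : ∀ i ∈ (univ : Finset (Fin n)), v i * v i ≤ (m - B) * v i + m * B :=
    fun i _ => by nlinarith [h1 i, hlow i]
  have hsum2 : (1 : ℝ) ≤ (m - B) * (∑ i, v i) + (n : ℝ) * (m * B) := by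
    calc (1 : ℝ) = ∑ i, v i * v i := hv.symm
      _ ≤ ∑ i, ((m - B) * v i + m * B) := Finset.sum_le_sum hpt
      _ = (m - B) * (∑ i, v i) + (n : ℝ) * (m * B) := by
          rw [Finset.sum_add_distrib, ← Finset.mul_sum, Finset.sum_const]
          simp [nsmul_eq_mul]
  have hmB : m - B ≤ 0 := by nlinarith
  have hfinal : (1 : ℝ) ≤ m ^ 2 * ((n : ℝ) ^ 2 + 2 * ((n : ℝ) - 1) * sn) := by
    have h3 : (m - B) * (∑ i, v i) ≤ (m - B) * (-sn * m) :=
      mul_le_mul_of_nonpos_left h2 hmB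
    nlinarith [hsum2, h3]
  set K : ℝ := (n : ℝ) ^ 2 + 2 * ((n : ℝ) - 1) * sn with hK_def
  have hKpos : 0 < K := by nlinarith
  have hsqK : Real.sqrt K ^ 2 = K := Real.sq_sqrt hKpos.le
  have hsqKpos : 0 < Real.sqrt K := Real.sqrt_pos.2 hKpos
  rw [div_le_iff₀ hsqKpos]
  nlinarith [mul_pos hm hsqKpos]

theorem cosine_measure_canonical_minimal_positive_basis (n : ℕ) (hn : 1 ≤ n)
    [DecidableEq (Fin n → ℝ)] :
    cosineMeasure
      (insert (fun _ => (-1 : ℝ)) (Finset.univ.image fun i : Fin n => Pi.single i (1 : ℝ)))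
      (Finset.insert_nonempty _ _) =
    1 / Real.sqrt ((n : ℝ) ^ 2 + 2 * ((n : ℝ) - 1) * Real.sqrt n) := by
  have hn' : (1 : ℝ) ≤ (n : ℝ) := by exact_mod_cast hn
  have hne : (univ : Finset (Fin n)).Nonempty := ⟨⟨0, hn⟩, mem_univ _⟩
  set sn := Real.sqrt n with hsn_def
  have hsn2 : sn ^ 2 = (n : ℝ) := Real.sq_sqrt (by positivity)
  have hsn1 : 1 ≤ sn := by
    rw [show (1:ℝ) = Real.sqrt 1 by simp [Real.sqrt_one]]
    exact Real.sqrt_le_sqrt hn'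
  have hsnpos : 0 < sn := lt_of_lt_of_le one_pos hsn1
  set K : ℝ := (n : ℝ) ^ 2 + 2 * ((n : ℝ) - 1) * sn with hK_def
  have hKpos : 0 < K := by nlinarith
  have hsqK : Real.sqrt K ^ 2 = K := Real.sq_sqrt hKpos.le
  have hsqKpos : 0 < Real.sqrt K := Real.sqrt_pos.2 hKpos
  set c : ℝ := 1 / Real.sqrt K with hc_def
  have hcpos : 0 < c := by positivity
  have hc2 : c ^ 2 = 1 / K := by
    rw [hc_def, div_pow, one_pow, hsqK]
  -- rewrite the sup'
  have hF : ∀ v : Fin n → ℝ,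
      (insert (fun _ => (-1 : ℝ)) (Finset.univ.image fun i : Fin n => Pi.single i (1 : ℝ))).sup'
        (Finset.insert_nonempty _ _) (fun d => v ⬝ᵥ d / Real.sqrt (d ⬝ᵥ d))
      = max (-(∑ i, v i) / sn) (univ.sup' hne v) := by
    intro v
    have e1 : (v ⬝ᵥ fun _ => (-1 : ℝ)) = -(∑ i, v i) := by
      simp [dotProduct]
    have e2 : ((fun _ : Fin n => (-1 : ℝ)) ⬝ᵥ fun _ => (-1 : ℝ)) = (n : ℝ) := by
      simp [dotProduct]
    rw [Finset.sup'_insert, Finset.sup'_image, e1, e2]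
    congr 1
    apply Finset.sup'_congr _ rfl
    intro i _
    simp [Function.comp, dotProduct_single, single_dotProduct,
      Pi.single_eq_same]
    all_goals exact hne.image _
  -- the witness
  set x : ℝ := -(sn + (n : ℝ) - 1) * c with hx_def
  set w : Fin n → ℝ := Function.update (fun _ => c) ⟨0, hn⟩ x with hw_def
  have hcard : ((univ : Finset (Fin n)) \ {⟨0, hn⟩}).card = n - 1 := by
    rw [Finset.sdiff_singleton_eq_erase, Finset.card_erase_of_mem (mem_univ _)]
    simp
  have hcastcard : (((univ : Finset (Fin n)) \ {⟨0, hn⟩}).card : ℝ) = (n : ℝ) - 1 := by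
    rw [hcard, Nat.cast_sub hn]; norm_num
  have hsumw : ∑ i, w i = -sn * c := by
    rw [hw_def, Finset.sum_update_of_mem (mem_univ _), Finset.sum_const,
      nsmul_eq_mul, hcastcard]
    rw [hx_def]; ring
  have hsqw : ∑ i, w i * w i = 1 := by
    have : ∀ i, w i * w i = Function.update (fun _ : Fin n => c * c) ⟨0, hn⟩ (x * x) i := by
      intro i
      rw [hw_def]
      by_cases h : i = ⟨0, hn⟩ <;> simp [h, Function.update_apply]
    rw [Finset.sum_congr rfl (fun i _ => this i),
      Finset.sum_update_of_mem (mem_univ _), Finset.sum_const, nsmul_eq_mul, hcastcard]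
    have : x * x + ((n : ℝ) - 1) * (c * c) = K * c ^ 2 := by
      rw [hx_def, hK_def]; nlinarith [hsn2]
    rw [this, hc2]; field_simp
  have hwle : ∀ i, w i ≤ c := by
    intro i
    rw [hw_def, Function.update_apply]
    split_ifs with h
    · rw [hx_def]; nlinarith
    · exact le_rfl
  have hFw : max (-(∑ i, w i) / sn) (univ.sup' hne w) = c := by
    have h1 : -(∑ i, w i) / sn = c := by
      rw [hsumw]; field_simp
    have h2 : univ.sup' hne w ≤ c := Finset.sup'_le _ _ (fun i _ => hwle i)
    rw [h1]
    exact max_eq_left h2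
  -- assemble
  unfold cosineMeasure
  simp only [hF]
  have hdot : ∀ v : Fin n → ℝ, v ⬝ᵥ v = ∑ i, v i * v i := fun v => rfl
  have hmemc : c ∈ {r : ℝ | ∃ v : Fin n → ℝ, v ⬝ᵥ v = 1 ∧
      r = max (-(∑ i, v i) / sn) (univ.sup' hne v)} :=
    ⟨w, by rw [hdot]; exact hsqw, hFw.symm⟩
  have hlb : ∀ r ∈ {r : ℝ | ∃ v : Fin n → ℝ, v ⬝ᵥ v = 1 ∧
      r = max (-(∑ i, v i) / sn) (univ.sup' hne v)}, c ≤ r := by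
    rintro r ⟨v, hv1, rfl⟩
    apply key_ineq n hn v _
    · intro i
      exact le_trans (Finset.le_sup' v (mem_univ i)) (le_max_right _ _)
    · have := le_max_left (-(∑ i, v i) / sn) (univ.sup' hne v)
      rw [div_le_iff₀ hsnpos] at this
      nlinarith
    · rw [← hdot]; exact hv1
  exact le_antisymm (csInf_le ⟨c, hlb⟩ hmemc) (le_csInf ⟨c, hmemc⟩ hlb)
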